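/- Let (A,↘,↗,↖,↙) be a quadri-algebra with associated associative algebra (A,*), where x*y = x↘y + x↗y + x↖y + x↙y. Then (L_↘, R_↖, A) is a bimodule of (A,*), i.e. L_↘(x*y) = L_↘(x)L_↘(y), R_↖(x*y) = R_↖(y)R_↖(x), and L_↘(x)R_↖(y) = R_↖(y)L_↘(x) for all x,y ∈ A. -/

import Mathlib

open LinearMap

/-- Quadri-algebra axioms for the four products ↘ (`dse`), ↗ (`dne`), ↖ (`dnw`), ↙ (`dsw`). -/
def IsQuadri {K A : Type*} [Field K] [AddCommGroup A] [Module K A]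
    (dse dne dnw dsw : A →ₗ[K] A →ₗ[K] A) : Prop :=
  (∀ x y z : A, dnw (dnw x y) z = dnw x (dse y z + dne y z + dnw y z + dsw y z)) ∧
  (∀ x y z : A, dnw (dne x y) z = dne x (dnw y z + dsw y z)) ∧
  (∀ x y z : A, dne (dne x y + dnw x y) z = dne x (dne y z + dse y z)) ∧
  (∀ x y z : A, dnw (dsw x y) z = dsw x (dne y z + dnw y z)) ∧
  (∀ x y z : A, dnw (dse x y) z = dse x (dnw y z)) ∧
  (∀ x y z : A, dne (dse x y + dsw x y) z = dse x (dne y z)) ∧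
  (∀ x y z : A, dsw (dnw x y + dsw x y) z = dsw x (dse y z + dsw y z)) ∧
  (∀ x y z : A, dsw (dne x y + dse x y) z = dse x (dsw y z)) ∧
  (∀ x y z : A, dse (dse x y + dne x y + dnw x y + dsw x y) z = dse x (dse y z))

theorem quadri_Lse_Rnw_bimodule_of_associated_associative_general
    {K A : Type*} [Field K] [AddCommGroup A] [Module K A]
    (dse dne dnw dsw : A →ₗ[K] A →ₗ[K] A)
    (hq : IsQuadri dse dne dnw dsw) :
    (∀ x y : A, dse (dse x y + dne x y + dnw x y + dsw x y) = dse x ∘ₗ dse y) ∧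
    (∀ x y : A, dnw.flip (dse x y + dne x y + dnw x y + dsw x y)
      = dnw.flip y ∘ₗ dnw.flip x) ∧
    (∀ x y : A, dse x ∘ₗ dnw.flip y = dnw.flip y ∘ₗ dse x) := by
  obtain ⟨nw_assoc, -, -, -, se_nw_assoc, -, -, -, se_assoc⟩ := hq
  refine ⟨fun x y => ?_, fun x y => ?_, fun x y => ?_⟩ <;> ext z
  · exact se_assoc x y z
  · exact (nw_assoc z x y).symm
  · exact (se_nw_assoc x z y).symm

/-- Corollary 3.4.4: for a quadri-algebra `(A, ↘, ↗, ↖, ↙)` with associated associative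
algebra `(A, *)` (`x * y = x↘y + x↗y + x↖y + x↙y`), the pair `(L_↘, R_↖)` is a
bimodule of `(A, *)` on `A`. -/
theorem quadri_Lse_Rnw_bimodule_of_associated_associative
    {K A : Type*} [Field K] [CharZero K] [AddCommGroup A] [Module K A]
    (dse dne dnw dsw : A →ₗ[K] A →ₗ[K] A)
    (hq : IsQuadri dse dne dnw dsw) :
    (∀ x y : A, dse (dse x y + dne x y + dnw x y + dsw x y) = dse x ∘ₗ dse y) ∧
    (∀ x y : A, dnw.flip (dse x y + dne x y + dnw x y + dsw x y)
      = dnw.flip y ∘ₗ dnw.flip x) ∧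
    (∀ x y : A, dse x ∘ₗ dnw.flip y = dnw.flip y ∘ₗ dse x) :=
  quadri_Lse_Rnw_bimodule_of_associated_associative_general dse dne dnw dsw hq
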